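/- arXiv:1703.08507 — 4 statements merged into one kernel-verified Lean document; each statement's English description precedes it below -/
import Mathlib

section
/- Let M = M₁ ×_F M₂ be a warped product Riemannian manifold and let ∇ and ᴹ¹∇ denote the Tripathi connections on M and M₁ respectively, where the defining data P, P₁, P₂ are vector fields on M₁ (lifted horizontally to M). Then for all vector fields X, Y on M₁, the vector field ∇_X Y on M is horizontal and is the lift of ᴹ¹∇_X Y on M₁. -/
/-- An algebraic model of the calculus of smooth vector fields on a Riemannian
manifold.  `Fn` plays the role of the commutative ring `C^∞(M)` of smooth
functions and `VF` that of the `C^∞(M)`-module `Γ(TM)` of smooth vector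
fields.  Vector fields act on functions as derivations, carry a Lie bracket,
a symmetric nondegenerate metric `g` and the associated Levi-Civita
connection `lc` (a torsion-free metric connection). -/
structure SVF (Fn : Type*) (VF : Type*) [CommRing Fn] [AddCommGroup VF]
    [Module Fn VF] where
  /-- the action `X ⬝ f` of a vector field on a function -/
  act : VF → Fn → Fn
  act_add : ∀ (X : VF) (f₁ f₂ : Fn), act X (f₁ + f₂) = act X f₁ + act X f₂
  act_mul : ∀ (X : VF) (f₁ f₂ : Fn),
    act X (f₁ * f₂) = act X f₁ * f₂ + f₁ * act X f₂
  act_add_left : ∀ (X Y : VF) (f : Fn), act (X + Y) f = act X f + act Y f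
  act_smul_left : ∀ (h : Fn) (X : VF) (f : Fn), act (h • X) f = h * act X f
  /-- the Lie bracket of vector fields -/
  bracket : VF → VF → VF
  bracket_act : ∀ (X Y : VF) (f : Fn),
    act (bracket X Y) f = act X (act Y f) - act Y (act X f)
  /-- the Riemannian metric -/
  g : VF → VF → Fn
  g_symm : ∀ X Y, g X Y = g Y X
  g_add_left : ∀ X Y Z, g (X + Y) Z = g X Z + g Y Z
  g_smul_left : ∀ (f : Fn) (X Y : VF), g (f • X) Y = f * g X Y
  g_nondeg : ∀ X, (∀ Z, g X Z = 0) → X = 0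
  /-- the Levi-Civita connection -/
  lc : VF → VF → VF
  lc_add_left : ∀ X Y Z, lc (X + Y) Z = lc X Z + lc Y Z
  lc_smul_left : ∀ (f : Fn) (X Y : VF), lc (f • X) Y = f • lc X Y
  lc_add_right : ∀ X Y Z, lc X (Y + Z) = lc X Y + lc X Z
  lc_leibniz : ∀ (X : VF) (f : Fn) (Y : VF),
    lc X (f • Y) = act X f • Y + f • lc X Y
  lc_torsion_free : ∀ X Y, lc X Y - lc Y X = bracket X Y
  lc_metric : ∀ X Y Z, act X (g Y Z) = g (lc X Y) Z + g Y (lc X Z)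

/-- The data `(f₁, f₂, P, P₁, P₂, φ)` defining a Tripathi connection on a
Riemannian manifold, together with the decomposition of the `(1,1)`-tensor
field `φ` into its symmetric part `φ₁` and skew-symmetric part `φ₂` with
respect to the metric:  `g (φ X) Y = Φ(X,Y) = Φ₁(X,Y) + Φ₂(X,Y)` with
`Φ₁(X,Y) = g (φ₁ X) Y` symmetric and `Φ₂(X,Y) = g (φ₂ X) Y` skew-symmetric.
The associated `1`-forms are `u = g P ·`, `u₁ = g P₁ ·` and `u₂ = g P₂ ·`. -/
structure TripathiData {Fn VF : Type*} [CommRing Fn] [AddCommGroup VF]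
    [Module Fn VF] (S : SVF Fn VF) where
  f₁ : Fn
  f₂ : Fn
  P : VF
  P₁ : VF
  P₂ : VF
  φ : VF → VF
  φ₁ : VF → VF
  φ₂ : VF → VF
  φ_decomp : ∀ X Y, S.g (φ X) Y = S.g (φ₁ X) Y + S.g (φ₂ X) Y
  φ₁_symm : ∀ X Y, S.g (φ₁ X) Y = S.g (φ₁ Y) X
  φ₂_skew : ∀ X Y, S.g (φ₂ X) Y = -S.g (φ₂ Y) X
  φ₁_add : ∀ X Y, φ₁ (X + Y) = φ₁ X + φ₁ Y
  φ₁_smul : ∀ (f : Fn) (X : VF), φ₁ (f • X) = f • φ₁ X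
  φ₂_add : ∀ X Y, φ₂ (X + Y) = φ₂ X + φ₂ Y
  φ₂_smul : ∀ (f : Fn) (X : VF), φ₂ (f • X) = f • φ₂ X

/-- The Tripathi connection
`∇_X Y = ∇̊_X Y + u(Y)φ₁X − u(X)φ₂Y − g(φ₁X,Y)P
  − f₁{u₁(X)Y + u₁(Y)X − g(X,Y)P₁} − f₂ g(X,Y)P₂`. -/
def TripathiData.conn {Fn VF : Type*} [CommRing Fn] [AddCommGroup VF]
    [Module Fn VF] {S : SVF Fn VF} (D : TripathiData S) (X Y : VF) : VF :=
  S.lc X Y + S.g D.P Y • D.φ₁ X - S.g D.P X • D.φ₂ Y - S.g (D.φ₁ X) Y • D.P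
    - D.f₁ • (S.g D.P₁ X • Y + S.g D.P₁ Y • X - S.g X Y • D.P₁)
    - (D.f₂ * S.g X Y) • D.P₂

/-- An algebraic model of a warped product `M = M₁ ×_F M₂` of Riemannian
manifolds.  `M`, `M₁`, `M₂` are the vector-field calculi of the total space,
the base and the fiber; `F` is the (positive, hence invertible) warping
function on the base, `liftFn₁`/`liftFn₂` are the pullbacks of functions
along the projections `π`/`σ`, and `liftVF₁`/`liftVF₂` are the horizontal
and vertical lifts of vector fields.  `nor` and `tan` are the orthogonal
projections onto the horizontal and vertical distributions, `gradF` is the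
gradient of `F` on the base, and the `lc_*` fields record O'Neill's formulas
for the Levi-Civita connection of the warped product metric
`g = π^* g₁ + (F ∘ π)² σ^* g₂`. -/
structure WarpedProduct (Fn VF Fn₁ VF₁ Fn₂ VF₂ : Type*)
    [CommRing Fn] [AddCommGroup VF] [Module Fn VF]
    [CommRing Fn₁] [AddCommGroup VF₁] [Module Fn₁ VF₁]
    [CommRing Fn₂] [AddCommGroup VF₂] [Module Fn₂ VF₂] where
  M : SVF Fn VF
  M₁ : SVF Fn₁ VF₁
  M₂ : SVF Fn₂ VF₂
  F : Fn₁
  Finv : Fn₁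
  F_mul_Finv : F * Finv = 1
  liftFn₁ : Fn₁ →+* Fn
  liftFn₂ : Fn₂ →+* Fn
  liftVF₁ : VF₁ → VF
  liftVF₂ : VF₂ → VF
  liftVF₁_add : ∀ X Y, liftVF₁ (X + Y) = liftVF₁ X + liftVF₁ Y
  liftVF₁_smul : ∀ (f : Fn₁) (X : VF₁),
    liftVF₁ (f • X) = liftFn₁ f • liftVF₁ X
  liftVF₂_add : ∀ V W, liftVF₂ (V + W) = liftVF₂ V + liftVF₂ W
  liftVF₂_smul : ∀ (f : Fn₂) (V : VF₂),
    liftVF₂ (f • V) = liftFn₂ f • liftVF₂ V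
  act_lift₁ : ∀ (X : VF₁) (f : Fn₁),
    M.act (liftVF₁ X) (liftFn₁ f) = liftFn₁ (M₁.act X f)
  act_lift₁₂ : ∀ (X : VF₁) (f : Fn₂), M.act (liftVF₁ X) (liftFn₂ f) = 0
  act_lift₂₁ : ∀ (V : VF₂) (f : Fn₁), M.act (liftVF₂ V) (liftFn₁ f) = 0
  act_lift₂ : ∀ (V : VF₂) (f : Fn₂),
    M.act (liftVF₂ V) (liftFn₂ f) = liftFn₂ (M₂.act V f)
  bracket_lift₁ : ∀ X Y,
    M.bracket (liftVF₁ X) (liftVF₁ Y) = liftVF₁ (M₁.bracket X Y)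
  bracket_lift₂ : ∀ V W,
    M.bracket (liftVF₂ V) (liftVF₂ W) = liftVF₂ (M₂.bracket V W)
  bracket_mixed : ∀ (X : VF₁) (V : VF₂),
    M.bracket (liftVF₁ X) (liftVF₂ V) = 0
  g_horiz : ∀ X Y, M.g (liftVF₁ X) (liftVF₁ Y) = liftFn₁ (M₁.g X Y)
  g_vert : ∀ V W,
    M.g (liftVF₂ V) (liftVF₂ W) = liftFn₁ (F * F) * liftFn₂ (M₂.g V W)
  g_mixed : ∀ (X : VF₁) (V : VF₂), M.g (liftVF₁ X) (liftVF₂ V) = 0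
  nor : VF → VF
  tan : VF → VF
  nor_add_tan : ∀ Z, nor Z + tan Z = Z
  nor_add : ∀ Z₁ Z₂, nor (Z₁ + Z₂) = nor Z₁ + nor Z₂
  nor_smul : ∀ (f : Fn) (Z : VF), nor (f • Z) = f • nor Z
  nor_horiz : ∀ X, nor (liftVF₁ X) = liftVF₁ X
  nor_vert : ∀ V, nor (liftVF₂ V) = 0
  tan_horiz : ∀ X, tan (liftVF₁ X) = 0
  tan_vert : ∀ V, tan (liftVF₂ V) = liftVF₂ V
  gradF : VF₁
  gradF_spec : ∀ X, M₁.g gradF X = M₁.act X F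
  lc_horiz : ∀ X Y, M.lc (liftVF₁ X) (liftVF₁ Y) = liftVF₁ (M₁.lc X Y)
  lc_mixed : ∀ (X : VF₁) (V : VF₂),
    M.lc (liftVF₁ X) (liftVF₂ V) = liftFn₁ (M₁.act X F * Finv) • liftVF₂ V
  lc_mixed' : ∀ (X : VF₁) (V : VF₂),
    M.lc (liftVF₂ V) (liftVF₁ X) = liftFn₁ (M₁.act X F * Finv) • liftVF₂ V
  lc_vert_nor : ∀ V W, nor (M.lc (liftVF₂ V) (liftVF₂ W))
    = -((M.g (liftVF₂ V) (liftVF₂ W) * liftFn₁ Finv) • liftVF₁ gradF)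
  lc_vert_tan : ∀ V W,
    tan (M.lc (liftVF₂ V) (liftVF₂ W)) = liftVF₂ (M₂.lc V W)

/-- For a warped product `M = M₁ ×_F M₂` whose Tripathi data `P, P₁, P₂` are
(horizontal lifts of) vector fields on `M₁` (and whose remaining data `f₁`,
`f₂`, `φ`, `φ₁`, `φ₂` are likewise lifted from `M₁`), the Tripathi covariant
derivative `∇_X Y` of horizontal lifts is horizontal and is the lift of
`ᴹ¹∇_X Y` computed on `M₁`. -/
theorem warped_tripathi_horizontal_is_lift
    {Fn VF Fn₁ VF₁ Fn₂ VF₂ : Type*}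
    [CommRing Fn] [AddCommGroup VF] [Module Fn VF]
    [CommRing Fn₁] [AddCommGroup VF₁] [Module Fn₁ VF₁]
    [CommRing Fn₂] [AddCommGroup VF₂] [Module Fn₂ VF₂]
    (Wp : WarpedProduct Fn VF Fn₁ VF₁ Fn₂ VF₂)
    (D : TripathiData Wp.M) (D₁ : TripathiData Wp.M₁)
    (hf₁ : D.f₁ = Wp.liftFn₁ D₁.f₁) (hf₂ : D.f₂ = Wp.liftFn₁ D₁.f₂)
    (hP : D.P = Wp.liftVF₁ D₁.P) (hP₁ : D.P₁ = Wp.liftVF₁ D₁.P₁)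
    (hP₂ : D.P₂ = Wp.liftVF₁ D₁.P₂)
    (hφ : ∀ X, D.φ (Wp.liftVF₁ X) = Wp.liftVF₁ (D₁.φ X))
    (hφ₁ : ∀ X, D.φ₁ (Wp.liftVF₁ X) = Wp.liftVF₁ (D₁.φ₁ X))
    (hφ₂ : ∀ X, D.φ₂ (Wp.liftVF₁ X) = Wp.liftVF₁ (D₁.φ₂ X)) :
    ∀ X Y : VF₁,
      Wp.nor (D.conn (Wp.liftVF₁ X) (Wp.liftVF₁ Y))
          = D.conn (Wp.liftVF₁ X) (Wp.liftVF₁ Y) ∧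
      D.conn (Wp.liftVF₁ X) (Wp.liftVF₁ Y) = Wp.liftVF₁ (D₁.conn X Y) := by
  intro X Y
  have hneg : ∀ Z : VF₁, Wp.liftVF₁ (-Z) = -(Wp.liftVF₁ Z) := by
    intro Z
    have h := Wp.liftVF₁_smul (-1) Z
    simpa using h
  have hsub : ∀ A B : VF₁, Wp.liftVF₁ (A - B) = Wp.liftVF₁ A - Wp.liftVF₁ B := by
    intro A B
    rw [sub_eq_add_neg, Wp.liftVF₁_add, hneg, sub_eq_add_neg]
  have key : D.conn (Wp.liftVF₁ X) (Wp.liftVF₁ Y) = Wp.liftVF₁ (D₁.conn X Y) := by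
    simp only [TripathiData.conn, hf₁, hf₂, hP, hP₁, hP₂, hφ₁, hφ₂,
      Wp.lc_horiz, Wp.g_horiz, hsub, Wp.liftVF₁_add, Wp.liftVF₁_smul, map_mul]
  exact ⟨by rw [key, Wp.nor_horiz], key⟩
end

section
/- Let M = M₁ ×_F M₂ be a warped product Riemannian manifold with Tripathi connection ∇ whose defining data P, P₁, P₂ are vector fields on M₂ (lifted vertically to M). Then for all vector fields X, Y on M₁: the horizontal component nor ∇_X Y is the lift of the connection applied to X,Y on M₁, and the vertical component is tan ∇_X Y = −g(φ₁X,Y)P + f₁ g(X,Y)P₁ − f₂ g(X,Y)P₂. -/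
/-- For a warped product `M = M₁ ×_F M₂` whose Tripathi data `P, P₁, P₂` are
vertical lifts of vector fields on `M₂`:  the horizontal component
`nor ∇_X Y` is the lift of the connection applied to `X, Y` on `M₁` (whose
defining vector data, the horizontal components of `P, P₁, P₂`, vanish), and
`tan ∇_X Y = −g(φ₁X,Y)P + f₁ g(X,Y)P₁ − f₂ g(X,Y)P₂`. -/
theorem warped_tripathi_fiberData_horizontal
    {Fn VF Fn₁ VF₁ Fn₂ VF₂ : Type*}
    [CommRing Fn] [AddCommGroup VF] [Module Fn VF]
    [CommRing Fn₁] [AddCommGroup VF₁] [Module Fn₁ VF₁]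
    [CommRing Fn₂] [AddCommGroup VF₂] [Module Fn₂ VF₂]
    (Wp : WarpedProduct Fn VF Fn₁ VF₁ Fn₂ VF₂)
    (D : TripathiData Wp.M) (P' P₁' P₂' : VF₂)
    (hP : D.P = Wp.liftVF₂ P') (hP₁ : D.P₁ = Wp.liftVF₂ P₁')
    (hP₂ : D.P₂ = Wp.liftVF₂ P₂')
    (D₁ : TripathiData Wp.M₁)
    (hD₁P : D₁.P = 0) (hD₁P₁ : D₁.P₁ = 0) (hD₁P₂ : D₁.P₂ = 0) :
    ∀ X Y : VF₁,
      Wp.nor (D.conn (Wp.liftVF₁ X) (Wp.liftVF₁ Y))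
          = Wp.liftVF₁ (D₁.conn X Y) ∧
      Wp.tan (D.conn (Wp.liftVF₁ X) (Wp.liftVF₁ Y))
          = -(Wp.M.g (D.φ₁ (Wp.liftVF₁ X)) (Wp.liftVF₁ Y) • D.P)
            + (D.f₁ * Wp.M.g (Wp.liftVF₁ X) (Wp.liftVF₁ Y)) • D.P₁
            - (D.f₂ * Wp.M.g (Wp.liftVF₁ X) (Wp.liftVF₁ Y)) • D.P₂ := by
  intro X Y
  have hg0 : ∀ Z : VF₁, Wp.M₁.g (0:VF₁) Z = 0 := by
    intro Z
    have h := Wp.M₁.g_add_left 0 0 Z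
    rw [add_zero] at h
    exact (left_eq_add.mp h)
  have hPY : Wp.M.g D.P (Wp.liftVF₁ Y) = 0 := by rw [hP, Wp.M.g_symm, Wp.g_mixed]
  have hPX : Wp.M.g D.P (Wp.liftVF₁ X) = 0 := by rw [hP, Wp.M.g_symm, Wp.g_mixed]
  have hP₁X : Wp.M.g D.P₁ (Wp.liftVF₁ X) = 0 := by rw [hP₁, Wp.M.g_symm, Wp.g_mixed]
  have hP₁Y : Wp.M.g D.P₁ (Wp.liftVF₁ Y) = 0 := by rw [hP₁, Wp.M.g_symm, Wp.g_mixed]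
  have hconn : D.conn (Wp.liftVF₁ X) (Wp.liftVF₁ Y)
      = Wp.liftVF₁ (Wp.M₁.lc X Y)
        + (-(Wp.M.g (D.φ₁ (Wp.liftVF₁ X)) (Wp.liftVF₁ Y) • D.P)
          + (D.f₁ * Wp.M.g (Wp.liftVF₁ X) (Wp.liftVF₁ Y)) • D.P₁
          - (D.f₂ * Wp.M.g (Wp.liftVF₁ X) (Wp.liftVF₁ Y)) • D.P₂) := by
    unfold TripathiData.conn
    rw [Wp.lc_horiz, hPX, hPY, hP₁X, hP₁Y]
    module
  have hD1 : D₁.conn X Y = Wp.M₁.lc X Y := by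
    unfold TripathiData.conn
    rw [hD₁P, hD₁P₁, hD₁P₂, hg0, hg0]
    module
  have hnor0 : Wp.nor 0 = 0 := by
    have h := Wp.nor_smul 0 0
    rwa [zero_smul, zero_smul] at h
  have hnorneg : ∀ Z : VF, Wp.nor (-Z) = -Wp.nor Z := by
    intro Z
    have h := Wp.nor_add Z (-Z)
    rw [add_neg_cancel, hnor0] at h
    exact (neg_eq_of_add_eq_zero_right h.symm).symm
  have hnorP : ∀ c : Fn, Wp.nor (c • D.P) = 0 := fun c => by
    rw [hP, Wp.nor_smul, Wp.nor_vert, smul_zero]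
  have hnorP₁ : ∀ c : Fn, Wp.nor (c • D.P₁) = 0 := fun c => by
    rw [hP₁, Wp.nor_smul, Wp.nor_vert, smul_zero]
  have hnorP₂ : ∀ c : Fn, Wp.nor (c • D.P₂) = 0 := fun c => by
    rw [hP₂, Wp.nor_smul, Wp.nor_vert, smul_zero]
  have hnorV : Wp.nor (-(Wp.M.g (D.φ₁ (Wp.liftVF₁ X)) (Wp.liftVF₁ Y) • D.P)
          + (D.f₁ * Wp.M.g (Wp.liftVF₁ X) (Wp.liftVF₁ Y)) • D.P₁
          - (D.f₂ * Wp.M.g (Wp.liftVF₁ X) (Wp.liftVF₁ Y)) • D.P₂) = 0 := by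
    rw [sub_eq_add_neg, Wp.nor_add, Wp.nor_add, hnorneg, hnorneg,
      hnorP, hnorP₁, hnorP₂]
    simp
  have hnorconn : Wp.nor (D.conn (Wp.liftVF₁ X) (Wp.liftVF₁ Y))
      = Wp.liftVF₁ (D₁.conn X Y) := by
    rw [hconn, Wp.nor_add, Wp.nor_horiz, hnorV, add_zero, hD1]
  refine ⟨hnorconn, ?_⟩
  have htan : Wp.tan (D.conn (Wp.liftVF₁ X) (Wp.liftVF₁ Y))
      = D.conn (Wp.liftVF₁ X) (Wp.liftVF₁ Y)
        - Wp.nor (D.conn (Wp.liftVF₁ X) (Wp.liftVF₁ Y)) := by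
    have h := Wp.nor_add_tan (D.conn (Wp.liftVF₁ X) (Wp.liftVF₁ Y))
    linear_combination (norm := abel) h
  rw [htan, hnorconn, hD1, hconn]
  abel
end

section
/- Let M = M₁ ×_F M₂ be a warped product Riemannian manifold with Tripathi connection ∇. For all vector fields X, Y on M₁ and V on M₂ one has g(∇_X Y, V) = −g(φ₁X,Y)g(P,V) + f₁ g(X,Y)g(P₁,V) − f₂ g(X,Y)g(P₂,V). -/
section Aux
variable {Fn VF : Type*} [CommRing Fn] [AddCommGroup VF] [Module Fn VF]
  (S : SVF Fn VF)

lemma SVF.g_smul_right (f : Fn) (X Y : VF) : S.g X (f • Y) = f * S.g X Y := by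
  rw [S.g_symm, S.g_smul_left, S.g_symm]

lemma SVF.g_add_right (X Y Z : VF) : S.g X (Y + Z) = S.g X Y + S.g X Z := by
  rw [S.g_symm, S.g_add_left, S.g_symm Y, S.g_symm Z]

lemma SVF.g_sub_left (X Y Z : VF) : S.g (X - Y) Z = S.g X Z - S.g Y Z := by
  have := S.g_add_left (X - Y) Y Z
  rw [sub_add_cancel] at this
  linear_combination -this

end Aux

/-- For a warped product `M = M₁ ×_F M₂` with Tripathi connection `∇`, where
`φ₁`, `φ₂` satisfy `g(φ₁X,V) = 0` and `g(φ₂Y,V) = 0` for `X, Y` horizontal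
and `V` vertical:
`g(∇_X Y, V) = −g(φ₁X,Y)g(P,V) + f₁ g(X,Y)g(P₁,V) − f₂ g(X,Y)g(P₂,V)`. -/
theorem warped_tripathi_g_conn_horizontal_vertical
    {Fn VF Fn₁ VF₁ Fn₂ VF₂ : Type*}
    [CommRing Fn] [AddCommGroup VF] [Module Fn VF]
    [CommRing Fn₁] [AddCommGroup VF₁] [Module Fn₁ VF₁]
    [CommRing Fn₂] [AddCommGroup VF₂] [Module Fn₂ VF₂]
    (Wp : WarpedProduct Fn VF Fn₁ VF₁ Fn₂ VF₂)
    (D : TripathiData Wp.M)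
    (hΦ₁ : ∀ (X : VF₁) (V : VF₂),
      Wp.M.g (D.φ₁ (Wp.liftVF₁ X)) (Wp.liftVF₂ V) = 0)
    (hΦ₂ : ∀ (Y : VF₁) (V : VF₂),
      Wp.M.g (D.φ₂ (Wp.liftVF₁ Y)) (Wp.liftVF₂ V) = 0) :
    ∀ (X Y : VF₁) (V : VF₂),
      Wp.M.g (D.conn (Wp.liftVF₁ X) (Wp.liftVF₁ Y)) (Wp.liftVF₂ V)
        = -(Wp.M.g (D.φ₁ (Wp.liftVF₁ X)) (Wp.liftVF₁ Y)
              * Wp.M.g D.P (Wp.liftVF₂ V))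
          + D.f₁ * Wp.M.g (Wp.liftVF₁ X) (Wp.liftVF₁ Y)
              * Wp.M.g D.P₁ (Wp.liftVF₂ V)
          - D.f₂ * Wp.M.g (Wp.liftVF₁ X) (Wp.liftVF₁ Y)
              * Wp.M.g D.P₂ (Wp.liftVF₂ V) := by
  intro X Y V
  have hS := Wp.M.g_symm
  simp only [TripathiData.conn, Wp.M.g_sub_left, Wp.M.g_add_left,
    Wp.M.g_smul_left, Wp.lc_horiz, Wp.g_mixed, hΦ₁, hΦ₂,
    hS (Wp.liftVF₁ X) (Wp.liftVF₂ V), hS (Wp.liftVF₁ Y) (Wp.liftVF₂ V)]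
  ring
end

section
/- Let M = M₁ ×_F M₂ be a warped product Riemannian manifold, and let ∇, ᴹ¹∇, ᴹ²∇ denote the semi-symmetric metric connections on M, M₁, M₂ associated to a vector field P on M₁ (lifted horizontally). Then for all vector fields X, Y on M₁ and V, W on M₂: (1) ∇_X Y is the lift of ᴹ¹∇_X Y; (2) ∇_X V = (X(F)/F)V and ∇_V X = (X(F)/F)V + u(X)V; (3) nor ∇_V W = −(g(V,W)/F) grad F − g(V,W)P; (4) tan ∇_V W is the lift of ᴹ²∇_V W. -/
/-- The semi-symmetric metric connection (Hayden–Yano) associated to a vector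
field `P` with `1`-form `u = g(P,·)`:
`∇_X Y = ∇̊_X Y + u(Y)X − g(X,Y)P`. -/
def ssmConn {Fn VF : Type*} [CommRing Fn] [AddCommGroup VF] [Module Fn VF]
    (S : SVF Fn VF) (P X Y : VF) : VF :=
  S.lc X Y + S.g P Y • X - S.g X Y • P

/-- Semi-symmetric metric connections on a warped product `M = M₁ ×_F M₂`
associated to a (horizontally lifted) vector field `P` on `M₁`:
(1) `∇_X Y` is the lift of `ᴹ¹∇_X Y`;
(2) `∇_X V = (X(F)/F)V` and `∇_V X = (X(F)/F)V + u(X)V`;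
(3) `nor ∇_V W = −(g(V,W)/F) grad F − g(V,W)P`;
(4) `tan ∇_V W` is the lift of `ᴹ²∇_V W` (the vertical component of `P`
vanishing). -/
theorem warped_ssm_baseField
    {Fn VF Fn₁ VF₁ Fn₂ VF₂ : Type*}
    [CommRing Fn] [AddCommGroup VF] [Module Fn VF]
    [CommRing Fn₁] [AddCommGroup VF₁] [Module Fn₁ VF₁]
    [CommRing Fn₂] [AddCommGroup VF₂] [Module Fn₂ VF₂]
    (Wp : WarpedProduct Fn VF Fn₁ VF₁ Fn₂ VF₂) (P : VF₁) :
    (∀ X Y : VF₁,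
      ssmConn Wp.M (Wp.liftVF₁ P) (Wp.liftVF₁ X) (Wp.liftVF₁ Y)
        = Wp.liftVF₁ (ssmConn Wp.M₁ P X Y)) ∧
    (∀ (X : VF₁) (V : VF₂),
      ssmConn Wp.M (Wp.liftVF₁ P) (Wp.liftVF₁ X) (Wp.liftVF₂ V)
          = Wp.liftFn₁ (Wp.M₁.act X Wp.F * Wp.Finv) • Wp.liftVF₂ V ∧
      ssmConn Wp.M (Wp.liftVF₁ P) (Wp.liftVF₂ V) (Wp.liftVF₁ X)
          = Wp.liftFn₁ (Wp.M₁.act X Wp.F * Wp.Finv) • Wp.liftVF₂ V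
            + Wp.M.g (Wp.liftVF₁ P) (Wp.liftVF₁ X) • Wp.liftVF₂ V) ∧
    (∀ V W : VF₂,
      Wp.nor (ssmConn Wp.M (Wp.liftVF₁ P) (Wp.liftVF₂ V) (Wp.liftVF₂ W))
        = -((Wp.M.g (Wp.liftVF₂ V) (Wp.liftVF₂ W) * Wp.liftFn₁ Wp.Finv)
              • Wp.liftVF₁ Wp.gradF)
          - Wp.M.g (Wp.liftVF₂ V) (Wp.liftVF₂ W) • Wp.liftVF₁ P) ∧
    (∀ V W : VF₂,
      Wp.tan (ssmConn Wp.M (Wp.liftVF₁ P) (Wp.liftVF₂ V) (Wp.liftVF₂ W))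
        = Wp.liftVF₂ (ssmConn Wp.M₂ 0 V W)) := by
  have g0 : ∀ W : VF₂, Wp.M₂.g 0 W = 0 := by
    intro W
    have h := Wp.M₂.g_add_left 0 0 W
    rw [add_zero] at h
    linear_combination -h
  have lift₁_sub : ∀ a b : VF₁, Wp.liftVF₁ (a - b) = Wp.liftVF₁ a - Wp.liftVF₁ b := by
    intro a b
    have : a - b = a + (-1 : Fn₁) • b := by rw [neg_one_smul]; abel
    rw [this, Wp.liftVF₁_add, Wp.liftVF₁_smul, map_neg, map_one, neg_one_smul]
    abel
  have nor_sub : ∀ a b : VF, Wp.nor (a - b) = Wp.nor a - Wp.nor b := by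
    intro a b
    have : a - b = a + (-1 : Fn) • b := by rw [neg_one_smul]; abel
    rw [this, Wp.nor_add, Wp.nor_smul, neg_one_smul]; abel
  have tan_eq : ∀ Z, Wp.tan Z = Z - Wp.nor Z := by
    intro Z; have := Wp.nor_add_tan Z; linear_combination (norm := abel) this
  refine ⟨?_, ?_, ?_, ?_⟩
  · intro X Y
    simp only [ssmConn, Wp.lc_horiz, Wp.g_horiz, lift₁_sub, Wp.liftVF₁_add,
      Wp.liftVF₁_smul]
  · intro X V
    constructor
    · simp only [ssmConn, Wp.lc_mixed, Wp.g_mixed, zero_smul, add_zero, sub_zero,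
        Wp.M.g_symm (Wp.liftVF₁ X) (Wp.liftVF₂ V)]
    · simp only [ssmConn, Wp.lc_mixed', Wp.g_mixed, zero_smul, add_zero, sub_zero,
        Wp.M.g_symm (Wp.liftVF₂ V) (Wp.liftVF₁ X)]
  · intro V W
    simp only [ssmConn]
    rw [nor_sub, Wp.nor_add, Wp.lc_vert_nor, Wp.nor_smul, Wp.nor_smul,
      Wp.nor_vert, Wp.nor_horiz, smul_zero, add_zero]
  · intro V W
    simp only [ssmConn]
    have tan_sub : ∀ a b : VF, Wp.tan (a - b) = Wp.tan a - Wp.tan b := by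
      intro a b
      rw [tan_eq, tan_eq, tan_eq, nor_sub]; abel
    have tan_add : ∀ a b : VF, Wp.tan (a + b) = Wp.tan a + Wp.tan b := by
      intro a b
      rw [tan_eq, tan_eq, tan_eq, Wp.nor_add]; abel
    have tan_smul : ∀ (f : Fn) (a : VF), Wp.tan (f • a) = f • Wp.tan a := by
      intro f a
      rw [tan_eq, tan_eq, Wp.nor_smul, smul_sub]
    rw [tan_sub, tan_add, Wp.lc_vert_tan, tan_smul, tan_smul, Wp.tan_vert,
      Wp.tan_horiz, smul_zero, sub_zero, Wp.g_mixed,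
      zero_smul, add_zero, g0, zero_smul, smul_zero, add_zero, sub_zero]
end
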